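/- Let Φ be a Young function of class Δ₂ ∩ ∇₂ and let f: ℝ³ × ℝ^{3×3} → ℝ be a Carathéodory function satisfying (H1) and (H2). Then for every linear subspace V ⊆ ℝ³ and every ξ_α ∈ V², the constrained tangentially homogenized density coincides with the homogenized density of the penalized unconstrained integrand: Tf⁰hom(V, ξ_α) = f̄⁰hom(V, ξ_α). -/

import Mathlib

open MeasureTheory Filter

noncomputable section

abbrev V3 : Type := Fin 3 → ℝ
abbrev V2 : Type := Fin 2 → ℝ
abbrev M33 : Type := Matrix (Fin 3) (Fin 3) ℝ
abbrev M32 : Type := Matrix (Fin 3) (Fin 2) ℝ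

/-- `Φ : [0,∞) → [0,∞)` is a Young function: continuous, convex, positive for `t > 0`,
`Φ(t)/t → 0` as `t → 0⁺` and `Φ(t)/t → ∞` as `t → ∞`. -/
def IsYoung (Φ : ℝ → ℝ) : Prop :=
  ContinuousOn Φ (Set.Ici 0) ∧ ConvexOn ℝ (Set.Ici 0) Φ ∧
  (∀ t : ℝ, 0 < t → 0 < Φ t) ∧
  Tendsto (fun t => Φ t / t) (nhdsWithin 0 (Set.Ioi 0)) (nhds 0) ∧
  Tendsto (fun t => Φ t / t) atTop atTop

/-- The Δ₂ condition (at infinity). -/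
def Delta2 (Φ : ℝ → ℝ) : Prop :=
  ∃ α : ℝ, 0 < α ∧ ∃ t₀ : ℝ, 0 ≤ t₀ ∧ ∀ t, t₀ ≤ t → Φ (2 * t) ≤ α * Φ t

/-- The ∇₂ condition. -/
def Nabla2 (Φ : ℝ → ℝ) : Prop :=
  ∃ β : ℝ, 0 < β ∧ ∃ t₀ : ℝ, 1 < t₀ ∧ ∀ t, t₀ ≤ t → Φ t ≤ (1 / (2 * β)) * Φ (β * t)

/-- Frobenius norm of a real matrix. -/
def frobNorm {m n : ℕ} (ξ : Matrix (Fin m) (Fin n) ℝ) : ℝ :=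
  Real.sqrt (∑ i, ∑ j, (ξ i j) ^ 2)

/-- The open cylinder `(tQ')₁ = (−t/2,t/2)² × (−1/2,1/2)`. -/
def openCyl (t : ℝ) : Set V3 := {x | |x 0| < t / 2 ∧ |x 1| < t / 2 ∧ |x 2| < 1 / 2}

/-- The lateral boundary `∂((−t/2,t/2)²) × (−1/2,1/2)`. -/
def latBdry (t : ℝ) : Set V3 := {x | max |x 0| |x 1| = t / 2 ∧ |x 2| < 1 / 2}

/-- The (a.e. defined, via Rademacher) matrix of partial derivatives of a Lipschitz map:
row `i`, column `j` is `∂φᵢ/∂xⱼ`. -/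
def gradm (φ : V3 → V3) (x : V3) : M33 :=
  Matrix.of fun i j => fderiv ℝ φ x (Pi.single j 1) i

/-- Planar-gradient matrix (3×2) of a map on `ℝ²`. -/
def gradm2 (ψ : V2 → V3) (y : V2) : M32 :=
  Matrix.of fun i j => fderiv ℝ ψ y (Pi.single j 1) i

/-- The 3×3 matrix `(ξ_α + ∇_αφ | ∇₃φ)`: first two columns of `A` shifted by `ξ_α`,
third column untouched. -/
def withCol (ξα : M32) (A : M33) : M33 :=
  Matrix.of fun i j => (if h : (j : ℕ) < 2 then ξα i ⟨(j : ℕ), h⟩ else 0) + A i j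

/-- The admissible class `𝒜_t`: Lipschitz maps vanishing on the lateral boundary. -/
def AdmSet (t : ℝ) : Set (V3 → V3) :=
  {φ | (∃ K : NNReal, LipschitzWith K φ) ∧ ∀ x ∈ latBdry t, φ x = 0}

/-- The constrained admissible class `𝒜_t(V)`: members of `𝒜_t` with values in `V`. -/
def AdmVSet (t : ℝ) (V : Submodule ℝ V3) : Set (V3 → V3) :=
  {φ | φ ∈ AdmSet t ∧ ∀ x, φ x ∈ V}

/-- The cell energy `∫_{(tQ')₁} f(x, (ξ_α + ∇_αφ | ∇₃φ)) dx`. -/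
def cellE (f : V3 → M33 → ℝ) (ξα : M32) (t : ℝ) (φ : V3 → V3) : ℝ :=
  ∫ x in openCyl t, f x (withCol ξα (gradm φ x))

/-- The cell infimum over a class `S` of test maps. -/
def cellInf (f : V3 → M33 → ℝ) (ξα : M32) (t : ℝ) (S : Set (V3 → V3)) : ℝ :=
  sInf ((fun φ => cellE f ξα t φ) '' S)

/-- The constrained tangentially homogenized density `Tf⁰hom(V, ξ_α)`. -/
def Tf0hom (f : V3 → M33 → ℝ) (V : Submodule ℝ V3) (ξα : M32) : ℝ :=
  liminf (fun t : ℝ => (t ^ 2)⁻¹ * cellInf f ξα t (AdmVSet t V)) atTop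

/-- The unconstrained homogenized density (liminf of the scaled cell infima over `𝒜_t`). -/
def homDens (f : V3 → M33 → ℝ) (ξα : M32) : ℝ :=
  liminf (fun t : ℝ => (t ^ 2)⁻¹ * cellInf f ξα t (AdmSet t)) atTop

/-- `P` is the orthogonal projection of `ℝ³` onto the subspace `V` (with respect to the
Euclidean inner product). -/
def IsOrthProjOnto (V : Submodule ℝ V3) (P : V3 → V3) : Prop :=
  IsLinearMap ℝ P ∧ (∀ x, P x ∈ V) ∧ (∀ x ∈ V, P x = x) ∧
    (∀ x : V3, ∀ v ∈ V, (∑ i, (x i - P x i) * v i) = 0)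

/-- Column-wise action `𝐏ξ = (Pξ₁ | Pξ₂ | Pξ₃)` of a projection on 3×3 matrices. -/
def Pmat (P : V3 → V3) (ξ : M33) : M33 :=
  Matrix.of fun i j => P (fun k => ξ k j) i

/-- The penalized integrand `f̄(x,ξ) = f(x,𝐏ξ) + Φ(|ξ − 𝐏ξ|)`. -/
def fbar (Φ : ℝ → ℝ) (P : V3 → V3) (f : V3 → M33 → ℝ) : V3 → M33 → ℝ :=
  fun x ξ => f x (Pmat P ξ) + Φ (frobNorm (ξ - Pmat P ξ))

/-- Carathéodory function: measurable in `x`, continuous in `ξ`. -/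
def Caratheodory (f : V3 → M33 → ℝ) : Prop :=
  (∀ ξ, Measurable fun x => f x ξ) ∧ (∀ x, Continuous fun ξ => f x ξ)

/-- (H1): 1-periodicity in the planar variable. -/
def H1per (f : V3 → M33 → ℝ) : Prop :=
  ∀ (x : V3) (ξ : M33) (i : Fin 3), (i : ℕ) < 2 → f (x + Pi.single i 1) ξ = f x ξ

/-- (H2): `Φ`-coercivity and `Φ`-growth, for a.e. `x` and all `ξ`. -/
def H2growth (Φ : ℝ → ℝ) (α β : ℝ) (f : V3 → M33 → ℝ) : Prop :=
  ∀ᵐ x : V3 ∂volume, ∀ ξ : M33, α * Φ (frobNorm ξ) ≤ f x ξ ∧ f x ξ ≤ β * (1 + Φ (frobNorm ξ))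

/-- `ξ_α ∈ V²`: both columns of the 3×2 matrix belong to `V`. -/
def colsIn (V : Submodule ℝ V3) (ξα : M32) : Prop :=
  ∀ j : Fin 2, (fun i => ξα i j) ∈ V

/-- The open unit square `Q' = (−1/2,1/2)²`. -/
def sq2 : Set V2 := {y | |y 0| < 1 / 2 ∧ |y 1| < 1 / 2}

/-!
The two cell infima already agree for every cell size `t`, so the two liminfs agree.
Along a `V`-valued competitor the gradient columns lie in `V`, hence are fixed by `𝐏`, and the
penalty term of `f̄` vanishes. Conversely, an arbitrary competitor `φ` is beaten by the
`V`-valued competitor `P ∘ φ`: its gradient is `𝐏` applied to the gradient of `φ`, so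
`f(x, ξ_α + ∇(P ∘ φ)) = f(x, 𝐏(ξ_α + ∇φ)) ≤ f̄(x, ξ_α + ∇φ)`. Lipschitz competitors have
bounded gradients, which keeps every energy finite.
-/

theorem IsYoung.map_zero {Φ : ℝ → ℝ} (hΦ : IsYoung Φ) : Φ 0 = 0 := by
  obtain ⟨hcont, -, -, hsmall, -⟩ := hΦ
  have hlim : Tendsto (fun t => Φ t / t * t) (nhdsWithin 0 (Set.Ioi 0)) (nhds 0) := by
    simpa using hsmall.mul (tendsto_nhdsWithin_of_tendsto_nhds tendsto_id)
  refine tendsto_nhds_unique (f := Φ) ?_ (hlim.congr' ?_)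
  · exact (hcont 0 Set.self_mem_Ici).mono_left (nhdsWithin_mono 0 Set.Ioi_subset_Ici_self)
  · filter_upwards [self_mem_nhdsWithin] with t ht
    exact div_mul_cancel₀ (Φ t) (ne_of_gt ht)

theorem IsYoung.nonneg {Φ : ℝ → ℝ} (hΦ : IsYoung Φ) {t : ℝ} (ht : 0 ≤ t) : 0 ≤ Φ t := by
  rcases ht.eq_or_lt with rfl | ht
  · exact hΦ.map_zero.ge
  · exact (hΦ.2.2.1 t ht).le

theorem frobNorm_nonneg {m n : ℕ} (ξ : Matrix (Fin m) (Fin n) ℝ) : 0 ≤ frobNorm ξ :=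
  Real.sqrt_nonneg _

@[simp]
theorem frobNorm_zero {m n : ℕ} : frobNorm (0 : Matrix (Fin m) (Fin n) ℝ) = 0 := by
  simp [frobNorm]

theorem continuous_frobNorm {m n : ℕ} : Continuous (frobNorm : Matrix (Fin m) (Fin n) ℝ → ℝ) := by
  unfold frobNorm
  fun_prop

theorem IsYoung.continuous_comp_frobNorm {Φ : ℝ → ℝ} (hΦ : IsYoung Φ) {m n : ℕ} :
    Continuous fun ξ : Matrix (Fin m) (Fin n) ℝ => Φ (frobNorm ξ) :=
  hΦ.1.comp_continuous continuous_frobNorm fun ξ => frobNorm_nonneg ξ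

theorem continuous_Pmat (L : V3 →L[ℝ] V3) : Continuous (Pmat L) := by
  unfold Pmat
  fun_prop

theorem continuous_withCol (ξα : M32) : Continuous (withCol ξα) := by
  unfold withCol
  fun_prop

theorem Pmat_add (L : V3 →L[ℝ] V3) (A B : M33) : Pmat L (A + B) = Pmat L A + Pmat L B := by
  ext i j
  exact congrFun (map_add L (fun k => A k j) (fun k => B k j)) i

@[simp]
theorem Pmat_zero (L : V3 →L[ℝ] V3) : Pmat L 0 = 0 := by
  ext i j
  exact congrFun (map_zero L) i

theorem Caratheodory.measurable_comp {f : V3 → M33 → ℝ} (hf : Caratheodory f) {M : V3 → M33}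
    (hM : ∀ i j, Measurable fun x => M x i j) : Measurable fun x => f x (M x) := by
  have hjoint : Measurable (Function.uncurry fun (A : Fin 3 → Fin 3 → ℝ) x => f x (Matrix.of A)) :=
    @measurable_uncurry_of_continuous_of_measurable _ _ _ _ TopologicalSpace.metrizableSpace_pi
      _ _ _ _ _ _ _ _ _ (fun x => hf.2 x) (fun A => hf.1 _)
  exact hjoint.comp ((measurable_pi_lambda _ fun i =>
    measurable_pi_lambda _ fun j => hM i j).prodMk measurable_id)

theorem Caratheodory.fbar {Φ : ℝ → ℝ} (hΦ : IsYoung Φ) {f : V3 → M33 → ℝ} (hf : Caratheodory f)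
    (L : V3 →L[ℝ] V3) : Caratheodory (fbar Φ L f) :=
  ⟨fun _ => (hf.1 _).add_const _, fun x =>
    ((hf.2 x).comp (continuous_Pmat L)).add
      (hΦ.continuous_comp_frobNorm.comp (continuous_id.sub (continuous_Pmat L)))⟩

theorem measurable_withCol_gradm_apply (ξα : M32) (φ : V3 → V3) (i j : Fin 3) :
    Measurable fun x => withCol ξα (gradm φ x) i j :=
  measurable_const.add ((measurable_pi_apply i).comp (measurable_fderiv_apply_const ℝ φ _))

theorem gradm_clm_comp (L : V3 →L[ℝ] V3) {φ : V3 → V3} {x : V3} (hφ : DifferentiableAt ℝ φ x) :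
    gradm (L ∘ φ) x = Pmat L (gradm φ x) := by
  ext i j
  simp [gradm, Pmat, fderiv_comp x L.differentiableAt hφ]

theorem gradm_of_not_differentiableAt {φ : V3 → V3} {x : V3} (hφ : ¬DifferentiableAt ℝ φ x) :
    gradm φ x = 0 := by
  ext i j
  simp [gradm, fderiv_zero_of_not_differentiableAt hφ]

theorem LipschitzWith.exists_isCompact_gradm_mem {φ : V3 → V3} {K : NNReal}
    (hφ : LipschitzWith K φ) : ∃ C : Set M33, IsCompact C ∧ ∀ x, gradm φ x ∈ C := by
  let toMat : (V3 →L[ℝ] V3) → M33 := fun T => Matrix.of fun i j => T (Pi.single j 1) i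
  have hcont : Continuous toMat := by fun_prop
  exact ⟨toMat '' Metric.closedBall 0 K, (isCompact_closedBall 0 _).image hcont,
    fun x => ⟨_, mem_closedBall_zero_iff.2 (norm_fderiv_le_of_lipschitz ℝ hφ), rfl⟩⟩

section Projection

variable {V : Submodule ℝ V3} {L : V3 →L[ℝ] V3}

theorem Pmat_eq_self (hL : LinearMap.IsProj V L) {ξ : M33} (hξ : ∀ j, (fun i => ξ i j) ∈ V) :
    Pmat L ξ = ξ := by
  ext i j
  exact congrFun (hL.map_id _ (hξ j)) i

theorem Pmat_withCol (hL : LinearMap.IsProj V L) {ξα : M32} (hξα : colsIn V ξα) (A : M33) :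
    Pmat L (withCol ξα A) = withCol ξα (Pmat L A) := by
  have hsplit : ∀ B, withCol ξα B = withCol ξα 0 + B := fun B => by
    ext i j
    simp [withCol]
  have hcols : ∀ j, (fun i => withCol ξα 0 i j) ∈ V := fun j => by
    by_cases hj : (j : ℕ) < 2
    · simp only [withCol, Matrix.of_apply, dif_pos hj, Matrix.zero_apply, add_zero]
      exact hξα ⟨j, hj⟩
    · simp only [withCol, Matrix.of_apply, dif_neg hj, Matrix.zero_apply, add_zero]
      exact V.zero_mem
  rw [hsplit, Pmat_add, Pmat_eq_self hL hcols, ← hsplit]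

theorem Pmat_gradm_of_forall_mem (hL : LinearMap.IsProj V L) {φ : V3 → V3} (hφ : ∀ y, φ y ∈ V)
    (x : V3) : Pmat L (gradm φ x) = gradm φ x := by
  by_cases hd : DifferentiableAt ℝ φ x
  · have hLφ : L ∘ φ = φ := funext fun y => hL.map_id _ (hφ y)
    rw [← gradm_clm_comp L hd, hLφ]
  · rw [gradm_of_not_differentiableAt hd, Pmat_zero]

end Projection

theorem fbar_apply_of_Pmat_eq {Φ : ℝ → ℝ} (hΦ : Φ 0 = 0) {P : V3 → V3} {f : V3 → M33 → ℝ}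
    {x : V3} {ξ : M33} (hξ : Pmat P ξ = ξ) : fbar Φ P f x ξ = f x ξ := by
  simp [fbar, hξ, hΦ]

theorem le_fbar_apply {Φ : ℝ → ℝ} (hΦ : IsYoung Φ) (P : V3 → V3) (f : V3 → M33 → ℝ) (x : V3)
    (ξ : M33) : f x (Pmat P ξ) ≤ fbar Φ P f x ξ :=
  le_add_of_nonneg_right (hΦ.nonneg (frobNorm_nonneg _))

section Growth

variable {Φ : ℝ → ℝ} {α β : ℝ} {f : V3 → M33 → ℝ}

theorem H2growth.ae_nonneg (hf : H2growth Φ α β f) (hΦ : IsYoung Φ) (hα : 0 ≤ α) :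
    ∀ᵐ x, ∀ ξ, 0 ≤ f x ξ :=
  hf.mono fun _ hx ξ => (mul_nonneg hα (hΦ.nonneg (frobNorm_nonneg ξ))).trans (hx ξ).1

theorem H2growth.ae_abs_fbar_le (hf : H2growth Φ α β f) (hΦ : IsYoung Φ) (hα : 0 ≤ α)
    (P : V3 → V3) : ∀ᵐ x, ∀ ξ,
      |fbar Φ P f x ξ| ≤ β * (1 + Φ (frobNorm (Pmat P ξ))) + Φ (frobNorm (ξ - Pmat P ξ)) := by
  filter_upwards [hf, hf.ae_nonneg hΦ hα] with x hx hx0 ξ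
  have hpen := hΦ.nonneg (frobNorm_nonneg (ξ - Pmat P ξ))
  rw [fbar, abs_of_nonneg (add_nonneg (hx0 _) hpen)]
  exact add_le_add_left (hx _).2 _

end Growth

theorem integrableOn_of_ae_abs_le_comp {X Y : Type*} [MeasurableSpace X] [TopologicalSpace Y]
    {μ : Measure X} {s : Set X} {u : X → ℝ} {M : X → Y} {g : Y → ℝ} {C : Set Y}
    (hs : μ s ≠ ⊤) (hu : AEStronglyMeasurable u μ) (hC : IsCompact C)
    (hg : ContinuousOn g C) (hMC : ∀ x, M x ∈ C) (hbound : ∀ᵐ x ∂μ, |u x| ≤ g (M x)) :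
    IntegrableOn u s μ := by
  obtain ⟨B, hB⟩ := hC.exists_bound_of_continuousOn hg
  refine Measure.integrableOn_of_bounded (M := B) hs hu (ae_restrict_of_ae ?_)
  filter_upwards [hbound] with x hx
  exact hx.trans ((le_abs_self _).trans (hB _ (hMC x)))

theorem volume_openCyl_ne_top (t : ℝ) : volume (openCyl t) ≠ ⊤ := by
  refine ne_top_of_le_ne_top measure_ball_lt_top.ne (measure_mono (s := openCyl t)
    (t := Metric.ball (0 : V3) (|t| + 1)) fun x ⟨h0, h1, h2⟩ => ?_)
  rw [mem_ball_zero_iff, pi_norm_lt_iff (by positivity)]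
  have : t / 2 < |t| + 1 := by linarith [le_abs_self t, abs_nonneg t]
  intro k
  fin_cases k
  · exact h0.trans this
  · exact h1.trans this
  · exact h2.trans (by linarith [abs_nonneg t])

theorem integrableOn_fbar_withCol_gradm {Φ : ℝ → ℝ} (hΦ : IsYoung Φ) {f : V3 → M33 → ℝ}
    (hf : Caratheodory f) {α β : ℝ} (hα : 0 ≤ α) (hf2 : H2growth Φ α β f) (L : V3 →L[ℝ] V3)
    (ξα : M32) {φ : V3 → V3} {K : NNReal} (hφ : LipschitzWith K φ) {s : Set V3}
    (hs : volume s ≠ ⊤) :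
    IntegrableOn (fun x => fbar Φ L f x (withCol ξα (gradm φ x))) s := by
  obtain ⟨C, hC, hgradC⟩ := hφ.exists_isCompact_gradm_mem
  have hΦP := hΦ.continuous_comp_frobNorm.comp (continuous_Pmat L)
  have hΦQ := hΦ.continuous_comp_frobNorm.comp (continuous_id.sub (continuous_Pmat L))
  refine integrableOn_of_ae_abs_le_comp hs
    ((hf.fbar hΦ L).measurable_comp (measurable_withCol_gradm_apply ξα φ)).aestronglyMeasurable
    (hC.image (continuous_withCol ξα))
    ((continuous_const.mul (continuous_const.add hΦP)).add hΦQ).continuousOn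
    (fun x => Set.mem_image_of_mem _ (hgradC x))
    ((hf2.ae_abs_fbar_le hΦ hα L).mono fun x hx => hx (withCol ξα (gradm φ x)))

theorem csInf_image_eq_of_retraction {γ : Type*} {S T : Set γ} {E F : γ → ℝ} (r : γ → γ)
    (hS : S.Nonempty) (hE : BddBelow (E '' S)) (hST : ∀ φ ∈ S, φ ∈ T ∧ F φ = E φ)
    (hr : ∀ φ ∈ T, r φ ∈ S ∧ E (r φ) ≤ F φ) : sInf (E '' S) = sInf (F '' T) := by
  obtain ⟨b, hb⟩ := hE
  have hF : BddBelow (F '' T) := ⟨b, by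
    rintro _ ⟨φ, hφ, rfl⟩
    exact (hb ⟨_, (hr φ hφ).1, rfl⟩).trans (hr φ hφ).2⟩
  obtain ⟨φ₀, hφ₀⟩ := hS
  refine le_antisymm (le_csInf ⟨_, φ₀, (hST φ₀ hφ₀).1, rfl⟩ ?_) (le_csInf ⟨_, φ₀, hφ₀, rfl⟩ ?_)
  · rintro _ ⟨φ, hφ, rfl⟩
    exact (csInf_le ⟨b, hb⟩ ⟨_, (hr φ hφ).1, rfl⟩).trans (hr φ hφ).2
  · rintro _ ⟨φ, hφ, rfl⟩
    rw [← (hST φ hφ).2]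
    exact csInf_le hF ⟨φ, (hST φ hφ).1, rfl⟩

theorem clm_comp_mem_AdmVSet {V : Submodule ℝ V3} {L : V3 →L[ℝ] V3} (hL : LinearMap.IsProj V L)
    {t : ℝ} {φ : V3 → V3} (hφ : φ ∈ AdmSet t) : L ∘ φ ∈ AdmVSet t V := by
  obtain ⟨⟨K, hK⟩, hbdry⟩ := hφ
  refine ⟨⟨⟨_, L.lipschitz.comp hK⟩, fun x hx => ?_⟩, fun x => hL.map_mem _⟩
  simp [hbdry x hx]

section CellEnergy

variable {Φ : ℝ → ℝ} {f : V3 → M33 → ℝ} {α β : ℝ} {V : Submodule ℝ V3} {L : V3 →L[ℝ] V3}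
  {ξα : M32}

theorem cellE_fbar_of_forall_mem (hΦ : IsYoung Φ) (hL : LinearMap.IsProj V L)
    (hξα : colsIn V ξα) {φ : V3 → V3} (hφ : ∀ y, φ y ∈ V) (t : ℝ) :
    cellE (fbar Φ L f) ξα t φ = cellE f ξα t φ := by
  refine integral_congr_ae (Eventually.of_forall fun x => fbar_apply_of_Pmat_eq hΦ.map_zero ?_)
  rw [Pmat_withCol hL hξα, Pmat_gradm_of_forall_mem hL hφ]

theorem cellE_clm_comp_le (hΦ : IsYoung Φ) (hf : Caratheodory f) (hα : 0 ≤ α)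
    (hf2 : H2growth Φ α β f) (hL : LinearMap.IsProj V L) (hξα : colsIn V ξα) {φ : V3 → V3}
    {K : NNReal} (hφ : LipschitzWith K φ) (t : ℝ) :
    cellE f ξα t (L ∘ φ) ≤ cellE (fbar Φ L f) ξα t φ := by
  refine integral_mono_of_nonneg ?_ (integrableOn_fbar_withCol_gradm hΦ hf hα hf2 L ξα hφ
    (volume_openCyl_ne_top t)) ?_
  · exact ae_restrict_of_ae ((hf2.ae_nonneg hΦ hα).mono fun x hx => hx _)
  · filter_upwards [ae_restrict_of_ae hφ.ae_differentiableAt] with x hx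
    rw [gradm_clm_comp L hx, ← Pmat_withCol hL hξα]
    exact le_fbar_apply hΦ L f x _

theorem cellInf_AdmVSet_eq_cellInf_fbar (hΦ : IsYoung Φ) (hf : Caratheodory f) (hα : 0 ≤ α)
    (hf2 : H2growth Φ α β f) (hL : LinearMap.IsProj V L) (hξα : colsIn V ξα) (t : ℝ) :
    cellInf f ξα t (AdmVSet t V) = cellInf (fbar Φ L f) ξα t (AdmSet t) := by
  have hzero : (0 : V3 → V3) ∈ AdmVSet t V :=
    ⟨⟨⟨0, LipschitzWith.const 0⟩, fun _ _ => rfl⟩, fun _ => V.zero_mem⟩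
  refine csInf_image_eq_of_retraction (L ∘ ·) ⟨0, hzero⟩ ⟨0, ?_⟩
    (fun φ hφ => ⟨hφ.1, cellE_fbar_of_forall_mem hΦ hL hξα hφ.2 t⟩)
    (fun φ hφ => ⟨clm_comp_mem_AdmVSet hL hφ, ?_⟩)
  · rintro _ ⟨φ, -, rfl⟩
    exact setIntegral_nonneg_of_ae ((hf2.ae_nonneg hΦ hα).mono fun x hx => hx _)
  · obtain ⟨⟨K, hK⟩, -⟩ := hφ
    exact cellE_clm_comp_le hΦ hf hα hf2 hL hξα hK t

end CellEnergy

theorem stmt_1_general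
    (Φ : ℝ → ℝ) (hΦ : IsYoung Φ)
    (f : V3 → M33 → ℝ) (hf : Caratheodory f)
    (α β : ℝ) (hα : 0 < α) (hf2 : H2growth Φ α β f)
    (V : Submodule ℝ V3) (P : V3 → V3) (hP : IsOrthProjOnto V P)
    (ξα : M32) (hξα : colsIn V ξα) :
    Tf0hom f V ξα = homDens (fbar Φ P f) ξα := by
  obtain ⟨hPlin, hPV, hPid, -⟩ := hP
  obtain ⟨L, rfl⟩ : ∃ L : V3 →L[ℝ] V3, ⇑L = P :=
    ⟨LinearMap.toContinuousLinearMap (IsLinearMap.mk' P hPlin), rfl⟩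
  simp only [Tf0hom, homDens, cellInf_AdmVSet_eq_cellInf_fbar hΦ hf hα.le hf2 ⟨hPV, hPid⟩ hξα]

/-- `Tf⁰hom(V, ξ_α) = f̄⁰hom(V, ξ_α)`. -/
theorem stmt_1
    (Φ : ℝ → ℝ) (hΦ : IsYoung Φ) (hΔ : Delta2 Φ) (hΝ : Nabla2 Φ)
    (f : V3 → M33 → ℝ) (hf : Caratheodory f) (hf1 : H1per f)
    (α β : ℝ) (hα : 0 < α) (hαβ : α ≤ β) (hf2 : H2growth Φ α β f)
    (V : Submodule ℝ V3) (P : V3 → V3) (hP : IsOrthProjOnto V P)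
    (ξα : M32) (hξα : colsIn V ξα) :
    Tf0hom f V ξα = homDens (fbar Φ P f) ξα :=
  stmt_1_general Φ hΦ f hf α β hα hf2 V P hP ξα hξα
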